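/- Let T = (V,E) be a locally finite tree (a connected acyclic simple graph in which every vertex has finitely many neighbors) containing at least one edge, and let γ ∈ (0,1). Suppose m and m⁺ assign to every ordered pair (i,j) of adjacent vertices real numbers m_{i→j} ∈ [−1,1] and m⁺_{i→j} ∈ [0,1] such that: (a) both m and m⁺ satisfy the recursion m_{i→j} = tanh( Σ_{k ∈ ∂i \ {j}} atanh( γ·m_{k→i} ) ) at every ordered adjacent pair (i,j); (b) |m_{i→j}| ≤ m⁺_{i→j} for every ordered adjacent pair; and (c) m_{i→j}·m_{j→i} = m⁺_{i→j}·m⁺_{j→i} for every edge {i,j}. Then either m_{i→j} = m⁺_{i→j} for all ordered adjacent pairs, or m_{i→j} = −m⁺_{i→j} for all ordered adjacent pairs. -/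

import Mathlib

/-!
Call a directed edge `(u, v)` doubly positive if `m⁺_{u→v}` and `m⁺_{v→u}` are both positive.
If there is one, `m_{u→v} m_{v→u} = m⁺_{u→v} m⁺_{v→u}` together with `|m| ≤ m⁺` forces
`m = ε m⁺` on both orientations of that edge for a sign `ε`, and replacing `m` by `-m` we may take
`ε = 1`. Agreement then spreads over the graph: since each summand `atanh(γ m_{k→i})` is at most
`atanh(γ m⁺_{k→i})`, equal sums at `(i, j)` force agreement of every message into `i` other than
the one from `j`, and agreement of all messages into `i` gives agreement of all messages out of `i`.
If there is no doubly positive edge, a positive `m⁺_{a→b}` is fed by a single positive incoming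
message, so `m⁺_{a→b} = γ m⁺_{c→a}`; iterating gives `m⁺_{a→b} ≤ γⁿ` for all `n`, hence `m⁺ = 0`
and then `m = 0`.
-/

open Real Finset

/-- the inverse hyperbolic tangent `atanh x = ½ log((1+x)/(1-x))`. -/
noncomputable def atanh (x : ℝ) : ℝ := (1 / 2) * Real.log ((1 + x) / (1 - x))

theorem atanh_zero : atanh 0 = 0 := by simp [atanh]

theorem atanh_neg (x : ℝ) : atanh (-x) = -atanh x := by
  rw [atanh, atanh, show (1 + -x) / (1 - -x) = ((1 + x) / (1 - x))⁻¹ by rw [inv_div]; ring,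
    Real.log_inv]
  ring

theorem atanh_eqOn_artanh : Set.EqOn atanh artanh (Set.Icc (-1) 1) :=
  fun _ hx ↦ (artanh_eq_half_log hx).symm

theorem atanh_strictMonoOn : StrictMonoOn atanh (Set.Ioo (-1) 1) :=
  strictMonoOn_artanh.congr (atanh_eqOn_artanh.symm.mono Set.Ioo_subset_Icc_self)

theorem tanh_atanh {x : ℝ} (hx : x ∈ Set.Ioo (-1) 1) : tanh (atanh x) = x := by
  rw [atanh_eqOn_artanh (Set.Ioo_subset_Icc_self hx), tanh_artanh hx]

theorem atanh_nonneg {x : ℝ} (h0 : 0 ≤ x) (h1 : x < 1) : 0 ≤ atanh x := by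
  rw [atanh_eqOn_artanh ⟨by linarith, h1.le⟩]
  exact artanh_nonneg h0

theorem eq_and_eq_or_eq_neg_and_eq_neg_of_abs_le {a b x y : ℝ} (ha : |a| ≤ x) (hb : |b| ≤ y)
    (hx : 0 < x) (hy : 0 < y) (h : a * b = x * y) : (a = x ∧ b = y) ∨ (a = -x ∧ b = -y) := by
  have habs : |a| * |b| = x * y := by rw [← abs_mul, h, abs_of_pos (mul_pos hx hy)]
  have hax : |a| = x := by nlinarith [abs_nonneg a, abs_nonneg b]
  have hby : |b| = y := by nlinarith [abs_nonneg a, abs_nonneg b]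
  rcases (abs_eq hx.le).1 hax with rfl | rfl <;> rcases (abs_eq hy.le).1 hby with rfl | rfl
  · exact Or.inl ⟨rfl, rfl⟩
  · nlinarith
  · nlinarith
  · exact Or.inr ⟨rfl, rfl⟩

theorem nonpos_of_forall_exists_eq_mul {α : Type*} {f : α → ℝ} {γ : ℝ} (hγ0 : 0 < γ)
    (hγ1 : γ < 1) (hle : ∀ x, f x ≤ 1) (hstep : ∀ x, 0 < f x → ∃ y, f x = γ * f y) (x : α) :
    f x ≤ 0 := by
  have hpow : ∀ n : ℕ, ∀ x, f x ≤ γ ^ n := by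
    intro n
    induction n with
    | zero => simpa using hle
    | succ n ih =>
      intro x
      by_cases hx : 0 < f x
      · obtain ⟨y, hy⟩ := hstep x hx
        rw [hy, pow_succ']
        exact mul_le_mul_of_nonneg_left (ih y) hγ0.le
      · exact (not_lt.1 hx).trans (pow_pos hγ0 _).le
  by_contra! hx
  obtain ⟨n, hn⟩ := exists_pow_lt_of_lt_one hx hγ1
  exact (hpow n x).not_gt hn

theorem SimpleGraph.Preconnected.forall_of_forall_adj {V : Type*} {G : SimpleGraph V}
    (hG : G.Preconnected) {P : V → Prop} (hstep : ∀ a b, G.Adj a b → P a → P b) {u : V}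
    (hu : P u) (w : V) : P w := by
  obtain ⟨p⟩ := hG u w
  induction p with
  | nil => exact hu
  | cons h _ ih => exact ih (hstep _ _ h hu)

section FixedPoint

variable {V : Type*} [DecidableEq V] {T : SimpleGraph V} [∀ v, Fintype (T.neighborSet v)]
  {γ : ℝ} {m mp : V → V → ℝ}

/-- `m i j` is the message `m_{i→j}` sent from `i` to its neighbour `j`. -/
def IsBPFixedPoint (T : SimpleGraph V) [∀ v, Fintype (T.neighborSet v)] (γ : ℝ)
    (m : V → V → ℝ) : Prop :=
  ∀ i j, T.Adj i j → m i j = tanh (∑ k ∈ T.neighborFinset i \ {j}, atanh (γ * m k i))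

theorem mem_neighborFinset_sdiff_singleton {i j k : V} :
    k ∈ T.neighborFinset i \ {j} ↔ T.Adj k i ∧ k ≠ j := by
  simp [SimpleGraph.mem_neighborFinset, T.adj_comm i k]

namespace IsBPFixedPoint

theorem neg (hm : IsBPFixedPoint T γ m) : IsBPFixedPoint T γ (-m) := by
  intro i j hij
  simp only [Pi.neg_apply, mul_neg, atanh_neg, sum_neg_distrib, tanh_neg, hm i j hij]

theorem mul_mem_Ioo (hm : IsBPFixedPoint T γ m) (hγ : |γ| ≤ 1) {i j : V} (hij : T.Adj i j) :
    γ * m i j ∈ Set.Ioo (-1) 1 := by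
  have hlt : |m i j| < 1 := by rw [hm i j hij]; exact abs_tanh_lt_one _
  refine Set.mem_Ioo.2 (abs_lt.1 ?_)
  rw [abs_mul]
  nlinarith [abs_nonneg γ, abs_nonneg (m i j)]

theorem eq_of_forall_incoming_eq (hm : IsBPFixedPoint T γ m) (hmp : IsBPFixedPoint T γ mp)
    {i k : V} (hik : T.Adj i k) (h : ∀ l, T.Adj l i → m l i = mp l i) : m i k = mp i k := by
  rw [hm i k hik, hmp i k hik]
  refine congrArg tanh (sum_congr rfl fun l hl ↦ ?_)
  rw [h l (mem_neighborFinset_sdiff_singleton.1 hl).1]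

theorem incoming_eq_of_eq (hm : IsBPFixedPoint T γ m) (hmp : IsBPFixedPoint T γ mp)
    (hγ0 : 0 < γ) (hγ1 : γ ≤ 1) (habs : ∀ i j, T.Adj i j → |m i j| ≤ mp i j) {i j k : V}
    (hij : T.Adj i j) (heq : m i j = mp i j) (hki : T.Adj k i) (hkj : k ≠ j) :
    m k i = mp k i := by
  have hγ : |γ| ≤ 1 := by rwa [abs_of_pos hγ0]
  have hsum : ∑ l ∈ T.neighborFinset i \ {j}, atanh (γ * m l i) =
      ∑ l ∈ T.neighborFinset i \ {j}, atanh (γ * mp l i) :=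
    tanh_injective (by rw [← hm i j hij, ← hmp i j hij, heq])
  have hle : ∀ l ∈ T.neighborFinset i \ {j}, atanh (γ * m l i) ≤ atanh (γ * mp l i) := by
    intro l hl
    have hli := (mem_neighborFinset_sdiff_singleton.1 hl).1
    refine (atanh_strictMonoOn.le_iff_le (hm.mul_mem_Ioo hγ hli) (hmp.mul_mem_Ioo hγ hli)).2 ?_
    exact mul_le_mul_of_nonneg_left ((le_abs_self _).trans (habs l i hli)) hγ0.le
  have hk := (sum_eq_sum_iff_of_le hle).1 hsum k (mem_neighborFinset_sdiff_singleton.2 ⟨hki, hkj⟩)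
  exact mul_left_cancel₀ hγ0.ne'
    (atanh_strictMonoOn.injOn (hm.mul_mem_Ioo hγ hki) (hmp.mul_mem_Ioo hγ hki) hk)

theorem forall_adj_eq_of_edge_eq (hconn : T.Preconnected) (hm : IsBPFixedPoint T γ m)
    (hmp : IsBPFixedPoint T γ mp) (hγ0 : 0 < γ) (hγ1 : γ ≤ 1)
    (habs : ∀ i j, T.Adj i j → |m i j| ≤ mp i j) {u v : V} (huv : T.Adj u v)
    (huv_eq : m u v = mp u v) (hvu_eq : m v u = mp v u) :
    ∀ i j, T.Adj i j → m i j = mp i j := by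
  have hstep : ∀ a b, T.Adj a b → (∀ l, T.Adj l a → m l a = mp l a) →
      ∀ l, T.Adj l b → m l b = mp l b := by
    intro a b hab ha l hlb
    by_cases hla : l = a
    · subst hla
      exact hm.eq_of_forall_incoming_eq hmp hab ha
    · exact hm.incoming_eq_of_eq hmp hγ0 hγ1 habs hab.symm (ha b hab.symm) hlb hla
  have hu : ∀ l, T.Adj l u → m l u = mp l u := by
    intro l hlu
    by_cases hlv : l = v
    · rwa [hlv]
    · exact hm.incoming_eq_of_eq hmp hγ0 hγ1 habs huv huv_eq hlu hlv
  exact fun i j hij ↦ hconn.forall_of_forall_adj hstep hu j i hij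

theorem incoming_eq_zero_of_eq_zero (hmp : IsBPFixedPoint T γ mp) (hγ0 : 0 < γ) (hγ1 : γ ≤ 1)
    (hnn : ∀ i j, T.Adj i j → 0 ≤ mp i j) {i k l : V} (hik : T.Adj i k) (h0 : mp i k = 0)
    (hli : T.Adj l i) (hlk : l ≠ k) : mp l i = 0 := by
  have hγ : |γ| ≤ 1 := by rwa [abs_of_pos hγ0]
  have hsum : ∑ l ∈ T.neighborFinset i \ {k}, atanh (γ * mp l i) = 0 :=
    tanh_injective (by rw [← hmp i k hik, h0, tanh_zero])
  have hterm_nonneg : ∀ l ∈ T.neighborFinset i \ {k}, 0 ≤ atanh (γ * mp l i) := by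
    intro l hl
    have hli := (mem_neighborFinset_sdiff_singleton.1 hl).1
    exact atanh_nonneg (mul_nonneg hγ0.le (hnn l i hli)) (hmp.mul_mem_Ioo hγ hli).2
  have hl := (sum_eq_zero_iff_of_nonneg hterm_nonneg).1 hsum l
    (mem_neighborFinset_sdiff_singleton.2 ⟨hli, hlk⟩)
  have hzero : γ * mp l i = 0 :=
    atanh_strictMonoOn.injOn (hmp.mul_mem_Ioo hγ hli) (by norm_num) (hl.trans atanh_zero.symm)
  exact (mul_eq_zero.1 hzero).resolve_left hγ0.ne'

theorem exists_eq_mul (hmp : IsBPFixedPoint T γ mp) (hγ0 : 0 < γ) (hγ1 : γ ≤ 1)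
    (hnn : ∀ i j, T.Adj i j → 0 ≤ mp i j) (hno : ∀ u v, T.Adj u v → mp u v = 0 ∨ mp v u = 0)
    {a b : V} (hab : T.Adj a b) (hpos : 0 < mp a b) : ∃ c, T.Adj c a ∧ mp a b = γ * mp c a := by
  obtain ⟨c, hc, hc0⟩ : ∃ c ∈ T.neighborFinset a \ {b}, mp c a ≠ 0 := by
    by_contra! h
    have hsum : ∑ l ∈ T.neighborFinset a \ {b}, atanh (γ * mp l a) = 0 :=
      sum_eq_zero fun l hl ↦ by rw [h l hl, mul_zero, atanh_zero]
    rw [hmp a b hab, hsum, tanh_zero] at hpos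
    exact hpos.false
  have hca := (mem_neighborFinset_sdiff_singleton.1 hc).1
  have hac0 : mp a c = 0 := (hno c a hca).resolve_left hc0
  have hsingle : ∑ l ∈ T.neighborFinset a \ {b}, atanh (γ * mp l a) = atanh (γ * mp c a) := by
    refine sum_eq_single_of_mem c hc fun l hl hlc ↦ ?_
    rw [hmp.incoming_eq_zero_of_eq_zero hγ0 hγ1 hnn hca.symm hac0
      (mem_neighborFinset_sdiff_singleton.1 hl).1 hlc, mul_zero, atanh_zero]
  refine ⟨c, hca, ?_⟩
  rw [hmp a b hab, hsingle, tanh_atanh (hmp.mul_mem_Ioo (by rwa [abs_of_pos hγ0]) hca)]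

theorem eq_zero_of_no_doubly_positive_edge (hmp : IsBPFixedPoint T γ mp) (hγ0 : 0 < γ)
    (hγ1 : γ < 1) (hnn : ∀ i j, T.Adj i j → 0 ≤ mp i j)
    (hno : ∀ u v, T.Adj u v → mp u v = 0 ∨ mp v u = 0)
    {i j : V} (hij : T.Adj i j) : mp i j = 0 := by
  refine le_antisymm ?_ (hnn i j hij)
  refine nonpos_of_forall_exists_eq_mul (f := fun d : T.Dart ↦ mp d.fst d.snd) hγ0 hγ1
    (fun d ↦ ?_) (fun d hd ↦ ?_) ⟨(i, j), hij⟩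
  · exact (le_abs_self _).trans (by rw [hmp _ _ d.adj]; exact (abs_tanh_lt_one _).le)
  · obtain ⟨c, hca, hc⟩ := hmp.exists_eq_mul hγ0 hγ1.le hnn hno d.adj hd
    exact ⟨⟨(c, d.fst), hca⟩, hc⟩

end IsBPFixedPoint

end FixedPoint

theorem message_rigidity (V : Type) [DecidableEq V] (T : SimpleGraph V)
    [∀ v, Fintype (T.neighborSet v)]
    (hconn : T.Connected)
    (γ : ℝ) (hγ0 : 0 < γ) (hγ1 : γ < 1)
    (m mp : V → V → ℝ)
    (hm_rec : ∀ i j, T.Adj i j →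
      m i j = Real.tanh (∑ k ∈ T.neighborFinset i \ {j}, atanh (γ * m k i)))
    (hmp_rec : ∀ i j, T.Adj i j →
      mp i j = Real.tanh (∑ k ∈ T.neighborFinset i \ {j}, atanh (γ * mp k i)))
    (habs : ∀ i j, T.Adj i j → |m i j| ≤ mp i j)
    (hprod : ∀ i j, T.Adj i j → m i j * m j i = mp i j * mp j i) :
    (∀ i j, T.Adj i j → m i j = mp i j) ∨
      (∀ i j, T.Adj i j → m i j = -mp i j) := by
  have hm : IsBPFixedPoint T γ m := hm_rec
  have hmp : IsBPFixedPoint T γ mp := hmp_rec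
  have hnn : ∀ i j, T.Adj i j → 0 ≤ mp i j := fun i j hij ↦ (abs_nonneg _).trans (habs i j hij)
  by_cases hdp : ∃ u v, T.Adj u v ∧ 0 < mp u v ∧ 0 < mp v u
  · obtain ⟨u, v, huv, hu, hv⟩ := hdp
    rcases eq_and_eq_or_eq_neg_and_eq_neg_of_abs_le (habs u v huv) (habs v u huv.symm) hu hv
      (hprod u v huv) with ⟨h₁, h₂⟩ | ⟨h₁, h₂⟩
    · exact Or.inl (hm.forall_adj_eq_of_edge_eq hconn.preconnected hmp hγ0 hγ1.le habs huv h₁ h₂)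
    · have habs_neg : ∀ i j, T.Adj i j → |(-m) i j| ≤ mp i j := by simpa using habs
      refine Or.inr fun i j hij ↦ neg_eq_iff_eq_neg.1 ?_
      exact hm.neg.forall_adj_eq_of_edge_eq hconn.preconnected hmp hγ0 hγ1.le habs_neg huv
        (by simp [h₁]) (by simp [h₂]) i j hij
  · push Not at hdp
    have hno : ∀ u v, T.Adj u v → mp u v = 0 ∨ mp v u = 0 := fun u v huv ↦
      (hnn u v huv).eq_or_lt'.imp id fun hu ↦ le_antisymm (hdp u v huv hu) (hnn v u huv.symm)
    refine Or.inl fun i j hij ↦ ?_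
    have h0 := hmp.eq_zero_of_no_doubly_positive_edge hγ0 hγ1 hnn hno hij
    rw [h0, ← abs_nonpos_iff, ← h0]
    exact habs i j hij
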